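/- Let G be any group. Then S(G) = ∩_{N ⊴_f G} F_N(G), the intersection of the subgroups F_N(G) over all normal subgroups N of G of finite index. -/

import Mathlib

/-- `S(G)` is the set of `x ∈ G` such that `x ^ |G:H| ∈ H` for every finite-index
subgroup `H ≤ G`. -/
def Sset (G : Type*) [Group G] : Set G :=
  {x : G | ∀ H : Subgroup G, H.index ≠ 0 → x ^ H.index ∈ H}

/-- The Fitting subgroup of a group: the subgroup generated by all nilpotent normal
subgroups.  For a finite group this is the largest nilpotent normal subgroup. -/
def fittingSubgroup (G : Type*) [Group G] : Subgroup G :=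
  sSup {N : Subgroup G | N.Normal ∧ Group.IsNilpotent N}

/-- `F_N(G)`: the preimage in `G` of the Fitting subgroup of `G/N` under the quotient
map, for `N ⊴ G`. -/
def fittingPreimage (G : Type*) [Group G] (N : Subgroup G) (hN : N.Normal) : Subgroup G :=
  letI := hN
  (fittingSubgroup (G ⧸ N)).comap (QuotientGroup.mk' N)

/-!
For a finite group `Q`, `x ∈ F(Q)` iff `x ^ [Q : K] ∈ K` for every subgroup `K`.

In a finite nilpotent group every proper subgroup is properly contained in its normalizer, so
`x ^ [Q : K] ∈ K` follows by climbing the normalizer tower from `K` to `Q`; it passes to elements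
of a nilpotent normal subgroup `M` because `[M : M ⊓ K] = [K ⊔ M : K]` divides `[Q : K]`. This
applies to `F(Q)` itself, which is the product of the pairwise commuting `p`-cores `O_p(Q)`.
Conversely, if `x` satisfies the condition then so does each `p`-part `y` of `x`, and
`y ^ [Q : P] ∈ P` for a Sylow `p`-subgroup `P`, with `[Q : P]` prime to `p`, forces `y ∈ P`.
Hence `y ∈ O_p(Q) ≤ F(Q)`, and `x`, the product of its `p`-parts, lies in `F(Q)`.

For an arbitrary group, pass to the finite quotients `G ⧸ N`: a subgroup of finite index contains
its normal core, which has finite index, and subgroups containing `N` correspond to subgroups of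
`G ⧸ N` of the same index.
-/

open Subgroup

section PrimaryDecomposition

variable {G : Type*} [Group G]

theorem exists_mul_eq_of_orderOf_dvd_mul {x : G} {m n : ℕ} (hmn : m.Coprime n)
    (hx : orderOf x ∣ m * n) :
    ∃ y ∈ zpowers x, ∃ z ∈ zpowers x, y ^ m = 1 ∧ z ^ n = 1 ∧ y * z = x := by
  have hxmn : x ^ (m * n) = 1 := orderOf_dvd_iff_pow_eq_one.mp hx
  have bezout : (n : ℤ) * m.gcdB n + m * m.gcdA n = 1 := by
    rw [add_comm, ← Nat.gcd_eq_gcd_ab, hmn.gcd_eq_one, Nat.cast_one]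
  refine ⟨x ^ ((n : ℤ) * m.gcdB n), zpow_mem_zpowers _ _,
    x ^ ((m : ℤ) * m.gcdA n), zpow_mem_zpowers _ _, ?_, ?_, ?_⟩
  · rw [← zpow_natCast, ← zpow_mul, show (n : ℤ) * m.gcdB n * m = (m * n : ℕ) * m.gcdB n by
      push_cast; ring, zpow_mul, zpow_natCast, hxmn, one_zpow]
  · rw [← zpow_natCast, ← zpow_mul, show (m : ℤ) * m.gcdA n * n = (m * n : ℕ) * m.gcdA n by
      push_cast; ring, zpow_mul, zpow_natCast, hxmn, one_zpow]
  · rw [← zpow_add, bezout, zpow_one]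

theorem IsOfFinOrder.induction_on_primePow {x : G} (hx : IsOfFinOrder x) {P : G → Prop}
    (mul : ∀ y ∈ zpowers x, ∀ z ∈ zpowers x, P y → P z → P (y * z))
    (primePow : ∀ y ∈ zpowers x, ∀ p k : ℕ, p.Prime → orderOf y ∣ p ^ k → P y) : P x := by
  suffices ∀ n ≠ 0, ∀ y ∈ zpowers x, orderOf y ∣ n → P y from
    this _ hx.orderOf_pos.ne' x (mem_zpowers x) dvd_rfl
  intro n
  induction n using Nat.recOnPrimeCoprime with
  | zero => exact fun h => (h rfl).elim
  | prime_pow p k hp => exact fun _ y hy hyk => primePow y hy p k hp hyk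
  | coprime a b _ _ hab iha ihb =>
    intro hab0 y hy hyab
    obtain ⟨u, hu, v, hv, hua, hvb, huv⟩ := exists_mul_eq_of_orderOf_dvd_mul hab hyab
    have hyx : zpowers y ≤ zpowers x := zpowers_le.mpr hy
    rw [← huv]
    exact mul u (hyx hu) v (hyx hv)
      (iha (left_ne_zero_of_mul hab0) u (hyx hu) (orderOf_dvd_of_pow_eq_one hua))
      (ihb (right_ne_zero_of_mul hab0) v (hyx hv) (orderOf_dvd_of_pow_eq_one hvb))

end PrimaryDecomposition

section PowIndex

variable {Q : Type*} [Group Q]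

theorem Group.IsNilpotent.pow_index_mem [Group.IsNilpotent Q] (K : Subgroup Q) [K.FiniteIndex]
    (z : Q) : z ^ K.index ∈ K := by
  induction hn : K.index using Nat.strong_induction_on generalizing K with
  | _ n ih =>
  subst hn
  obtain rfl | hK := eq_or_ne K ⊤
  · exact mem_top _
  set N := normalizer (K : Set Q)
  have hKN : K < N := normalizerCondition_of_isNilpotent K (lt_top_iff_ne_top.mpr hK)
  have : N.FiniteIndex := finiteIndex_of_le hKN.le
  have hzN : z ^ N.index ∈ N := ih _ (index_strictAnti hKN) _ rfl
  have hzK : (z ^ N.index) ^ K.relIndex N ∈ K :=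
    mem_subgroupOf.mp (Subgroup.pow_index_mem (K.subgroupOf N) ⟨_, hzN⟩)
  rwa [← relIndex_mul_index hKN.le, mul_comm, pow_mul]

variable [Finite Q]

theorem relIndex_sup_eq_relIndex_of_normal (K M : Subgroup Q) [M.Normal] :
    K.relIndex (K ⊔ M) = K.relIndex M := by
  have hK := relIndex_mul_relIndex (K ⊓ M) K (K ⊔ M) inf_le_left le_sup_left
  have hM := relIndex_mul_relIndex (K ⊓ M) M (K ⊔ M) inf_le_right le_sup_right
  rw [inf_relIndex_left, ← hM, inf_relIndex_right, relIndex_sup_right,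
    mul_comm (K.relIndex M)] at hK
  have hMK : M.relIndex K ≠ 0 := index_ne_zero_of_finite
  exact Nat.eq_of_mul_eq_mul_left (Nat.pos_of_ne_zero hMK) hK

theorem pow_index_mem_of_mem_of_isNilpotent (M : Subgroup Q) [M.Normal] [Group.IsNilpotent M]
    (K : Subgroup Q) {y : Q} (hy : y ∈ M) : y ^ K.index ∈ K := by
  have hyK : y ^ K.relIndex M ∈ K :=
    mem_subgroupOf.mp (Group.IsNilpotent.pow_index_mem (K.subgroupOf M) ⟨y, hy⟩)
  obtain ⟨c, hc⟩ : K.relIndex M ∣ K.index :=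
    relIndex_sup_eq_relIndex_of_normal K M ▸ relIndex_dvd_index_of_le le_sup_left
  rw [hc, pow_mul]
  exact pow_mem hyK c

end PowIndex

section PCore

def pCore (p : ℕ) (G : Type*) [Group G] : Subgroup G :=
  ⨅ P : Sylow p G, (P : Subgroup G)

variable {G : Type*} [Group G] (p : ℕ)

instance pCore_normal : (pCore p G).Normal where
  conj_mem x hx g := by
    simp only [pCore, mem_iInf] at hx ⊢
    intro P
    have := hx (g⁻¹ • P)
    rw [Sylow.coe_subgroup_smul, mem_pointwise_smul_iff_inv_smul_mem] at this
    simpa using this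

theorem isPGroup_pCore : IsPGroup p (pCore p G) :=
  (Classical.arbitrary (Sylow p G)).isPGroup'.to_le (iInf_le _ _)

theorem mem_pCore_of_pow_index_mem [Finite G] [Fact p.Prime] {y : G} {k : ℕ}
    (hy : orderOf y ∣ p ^ k) (h : ∀ P : Sylow p G, y ^ (P : Subgroup G).index ∈ P) :
    y ∈ pCore p G := by
  refine mem_iInf.mpr fun P => ?_
  have hco : (P : Subgroup G).index.Coprime (orderOf y) :=
    (((Nat.Prime.coprime_iff_not_dvd Fact.out).mpr P.not_dvd_index).pow_left k
      |>.coprime_dvd_left hy).symm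
  obtain ⟨m, hm⟩ := exists_pow_eq_self_of_coprime hco
  rw [← hm]
  exact pow_mem (h P) m

end PCore

section Fitting

variable {Q : Type*} [Group Q]

theorem pairwise_commute_pCore :
    Pairwise fun p q : (Nat.card Q).primeFactors =>
      ∀ x y : Q, x ∈ pCore p Q → y ∈ pCore q Q → Commute x y := by
  intro p q hpq
  have := Fact.mk (Nat.prime_of_mem_primeFactors p.2)
  have := Fact.mk (Nat.prime_of_mem_primeFactors q.2)
  exact commute_of_normal_of_disjoint _ _ inferInstance inferInstance
    (IsPGroup.disjoint_of_ne _ _ (Subtype.coe_ne_coe.mpr hpq) _ _ (isPGroup_pCore _)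
      (isPGroup_pCore _))

variable [Finite Q]

theorem pCore_le_fittingSubgroup (p : ℕ) [Fact p.Prime] : pCore p Q ≤ fittingSubgroup Q :=
  le_sSup ⟨inferInstance, (isPGroup_pCore p).isNilpotent⟩

instance isNilpotent_iSup_pCore :
    Group.IsNilpotent (⨆ p : (Nat.card Q).primeFactors, pCore p Q : Subgroup Q) := by
  have (p : (Nat.card Q).primeFactors) : Group.IsNilpotent (pCore p Q) :=
    have := Fact.mk (Nat.prime_of_mem_primeFactors p.2)
    (isPGroup_pCore p.1).isNilpotent
  have h := Group.nilpotent_of_surjective _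
    (MonoidHom.rangeRestrict_surjective (noncommPiCoprod (pairwise_commute_pCore (Q := Q))))
  rwa [noncommPiCoprod_range] at h

theorem fittingSubgroup_le_iSup_pCore :
    fittingSubgroup Q ≤ ⨆ p : (Nat.card Q).primeFactors, pCore p Q := by
  refine sSup_le fun M ⟨_, _⟩ x hx => ?_
  refine (isOfFinOrder_of_finite x).induction_on_primePow (fun _ _ _ _ => mul_mem) ?_
  intro y hy p k hp hyk
  have := Fact.mk hp
  by_cases hpQ : p ∣ Nat.card Q
  · have hyp : y ∈ pCore p Q := mem_pCore_of_pow_index_mem p hyk fun P =>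
      pow_index_mem_of_mem_of_isNilpotent M P (zpowers_le.mpr hx hy)
    exact le_iSup (fun p : (Nat.card Q).primeFactors => pCore p Q)
      ⟨p, Nat.mem_primeFactors.mpr ⟨hp, hpQ, Nat.card_pos.ne'⟩⟩ hyp
  · have hy1 : orderOf y = 1 := Nat.eq_one_of_dvd_coprimes
      (((Nat.Prime.coprime_iff_not_dvd hp).mpr hpQ).pow_left k) hyk (orderOf_dvd_natCard y)
    rw [orderOf_eq_one_iff.mp hy1]
    exact one_mem _

theorem fittingSubgroup_eq_iSup_pCore :
    fittingSubgroup Q = ⨆ p : (Nat.card Q).primeFactors, pCore p Q :=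
  fittingSubgroup_le_iSup_pCore.antisymm <| iSup_le fun p =>
    have := Fact.mk (Nat.prime_of_mem_primeFactors p.2)
    pCore_le_fittingSubgroup p.1

theorem mem_fittingSubgroup_iff_forall_pow_index_mem {x : Q} :
    x ∈ fittingSubgroup Q ↔ ∀ K : Subgroup Q, x ^ K.index ∈ K := by
  refine ⟨fun hx K => ?_, fun hx => ?_⟩
  · rw [fittingSubgroup_eq_iSup_pCore] at hx
    exact pow_index_mem_of_mem_of_isNilpotent _ K hx
  · refine (isOfFinOrder_of_finite x).induction_on_primePow (fun _ _ _ _ => mul_mem) ?_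
    rintro y ⟨a, rfl⟩ p k hp hyk
    have := Fact.mk hp
    refine pCore_le_fittingSubgroup p (mem_pCore_of_pow_index_mem p hyk fun P => ?_)
    rw [← zpow_natCast, ← zpow_mul, mul_comm, zpow_mul, zpow_natCast]
    exact zpow_mem (hx P) a

end Fitting

theorem pow_index_comap_mem_iff {G Q : Type*} [Group G] [Group Q] {f : G →* Q}
    (hf : Function.Surjective f) (K : Subgroup Q) (x : G) :
    x ^ (K.comap f).index ∈ K.comap f ↔ f x ^ K.index ∈ K := by
  rw [index_comap_of_surjective K hf, mem_comap, map_pow]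

/-- For any group `G`, `S(G)` is the intersection of the subgroups `F_N(G)` over all
normal subgroups `N ⊴ G` of finite index. -/
theorem sSet_eq_iInter_fittingPreimage {G : Type*} [Group G] :
    Sset G = ⋂ (N : Subgroup G) (hN : N.Normal) (_ : N.index ≠ 0),
      (fittingPreimage G N hN : Set G) := by
  ext x
  simp only [Sset, Set.mem_ofPred_eq, Set.mem_iInter, SetLike.mem_coe, fittingPreimage, mem_comap]
  constructor
  · intro hx N _ hN
    have : N.FiniteIndex := ⟨hN⟩
    refine mem_fittingSubgroup_iff_forall_pow_index_mem.mpr fun K => ?_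
    have hf := QuotientGroup.mk'_surjective N
    rw [← pow_index_comap_mem_iff hf]
    exact hx _ (index_comap_of_surjective K hf ▸ index_ne_zero_of_finite)
  · intro hx H hH
    have : H.FiniteIndex := ⟨hH⟩
    have hmem := mem_fittingSubgroup_iff_forall_pow_index_mem.mp
      (hx H.normalCore (normalCore_normal H) FiniteIndex.index_ne_zero)
      (H.map (QuotientGroup.mk' H.normalCore))
    rwa [← pow_index_comap_mem_iff (QuotientGroup.mk'_surjective _),
      comap_map_eq_self ((QuotientGroup.ker_mk' _).trans_le (normalCore_le H))] at hmem
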